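/- If tr(M) ≠ 0, then the bivariate polynomial χ(λ, μ) = det(A − λM − μI_m) contains a nonzero mixed term (a monomial λ^s μ^t with s ≥ 1 and t ≥ 1), provided m ≥ 2. -/

import Mathlib

/-!
Viewed as a polynomial in `μ` over `ℂ[λ]`, `χ` is `(-1)^m` times the characteristic polynomial
of `A - λM`, whose coefficient of `μ^(m-1)` is `-tr (A - λM) = λ tr M - tr A`. So the coefficient
of `λ μ^(m-1)` in `χ` is `(-1)^m tr M ≠ 0`, a mixed term because `m ≥ 2`.
-/

open Matrix MvPolynomial

section Charpoly

variable {n S : Type*} [Fintype n] [DecidableEq n] [CommRing S]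

theorem Matrix.map_C_sub_X_smul_one (N : Matrix n n S) :
    N.map Polynomial.C - (Polynomial.X : Polynomial S) • 1 = -charmatrix N := by
  rw [charmatrix, neg_sub, scalar_apply, smul_one_eq_diagonal, RingHom.mapMatrix_apply]

theorem Matrix.coeff_det_map_C_sub_X_smul_one [Nonempty n] (N : Matrix n n S) :
    (det (N.map Polynomial.C - (Polynomial.X : Polynomial S) • 1)).coeff (Fintype.card n - 1) =
      -((-1) ^ Fintype.card n * trace N) := by
  rw [map_C_sub_X_smul_one, det_neg, ← charpoly, ← map_one Polynomial.C, ← map_neg, ← map_pow,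
    Polynomial.coeff_C_mul, trace_eq_neg_charpoly_coeff, mul_neg, neg_neg]

end Charpoly

namespace MvPolynomial

/-- The analogue of `MvPolynomial.finSuccEquiv` singling out the last variable. -/
noncomputable def finSuccEquivLast (R : Type*) [CommSemiring R] (n : ℕ) :
    MvPolynomial (Fin (n + 1)) R ≃ₐ[R] Polynomial (MvPolynomial (Fin n) R) :=
  (renameEquiv R _root_.finSuccEquivLast).trans (optionEquivLeft R (Fin n))

variable {R : Type*} [CommSemiring R] {n : ℕ}

@[simp]
theorem finSuccEquivLast_X_last : finSuccEquivLast R n (X (Fin.last n)) = Polynomial.X := by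
  simp [finSuccEquivLast]

@[simp]
theorem finSuccEquivLast_X_castSucc (i : Fin n) :
    finSuccEquivLast R n (X i.castSucc) = Polynomial.C (X i) := by
  simp [finSuccEquivLast]

@[simp]
theorem finSuccEquivLast_C (r : R) : finSuccEquivLast R n (C r) = Polynomial.C (C r) := by
  simp [finSuccEquivLast]

theorem finSuccEquivLast_coeff_coeff (p : MvPolynomial (Fin (n + 1)) R) (t : ℕ)
    (d : Fin n →₀ ℕ) :
    coeff d ((finSuccEquivLast R n p).coeff t) =
      p.coeff (d.mapDomain Fin.castSucc + Finsupp.single (Fin.last n) t) := by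
  have hd : d.optionElim t = (d.mapDomain Fin.castSucc + Finsupp.single (Fin.last n) t).mapDomain
      _root_.finSuccEquivLast := by
    ext (_ | i) <;> simp [Finsupp.mapDomain_equiv_apply,
      Finsupp.mapDomain_apply (Fin.castSucc_injective n),
      Finsupp.mapDomain_of_notMem_range _ (Fin.last n)]
  rw [finSuccEquivLast, AlgEquiv.trans_apply, optionEquivLeft_coeff_coeff, renameEquiv_apply, hd,
    coeff_rename_mapDomain _ (Equiv.injective _)]

theorem coeff_single_C_sub_X_mul_C {σ R : Type*} [CommRing R] (i : σ) (a b : R) :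
    coeff (Finsupp.single i 1) (C a - X i * C b) = -b := by
  rw [coeff_sub, coeff_C_of_ne_zero (Finsupp.single_ne_zero.mpr one_ne_zero), mul_comm,
    coeff_C_mul, coeff_X_same, mul_one, zero_sub]

end MvPolynomial

namespace Matrix

variable {ι σ R : Type*} [Fintype ι] [CommRing R]

/-- The pencil `A - λ M`, with the variable `X i` as `λ`. -/
noncomputable def pencil (A M : Matrix ι ι R) (i : σ) : Matrix ι ι (MvPolynomial σ R) :=
  A.map C - (X i : MvPolynomial σ R) • M.map C

theorem trace_pencil (A M : Matrix ι ι R) (i : σ) :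
    trace (pencil A M i) = C (trace A) - X i * C (trace M) := by
  simp [pencil, trace_sub, trace_smul, ← AddMonoidHom.map_trace]

theorem finSuccEquivLast_det_pencil_sub_X_smul_one [DecidableEq ι] (A M : Matrix ι ι R) :
    finSuccEquivLast R 1 (det (A.map C - (X 0 : MvPolynomial (Fin 2) R) • M.map C -
        (X 1 : MvPolynomial (Fin 2) R) • 1)) =
      det ((pencil A M 0).map Polynomial.C -
        (Polynomial.X : Polynomial (MvPolynomial (Fin 1) R)) • 1) := by
  rw [AlgEquiv.map_det]
  congr 1
  ext i j : 1
  have hX0 : finSuccEquivLast R 1 (X 0) = Polynomial.C (X 0) := finSuccEquivLast_X_castSucc 0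
  have hX1 : finSuccEquivLast R 1 (X 1) = Polynomial.X := finSuccEquivLast_X_last
  by_cases hij : i = j <;> simp [pencil, hij, hX0, hX1]

end Matrix

theorem stmt_12 (m : ℕ) (hm : 2 ≤ m) (A M : Matrix (Fin m) (Fin m) ℂ)
    (htr : Matrix.trace M ≠ 0) :
    ∃ s t : ℕ, 1 ≤ s ∧ 1 ≤ t ∧
      MvPolynomial.coeff (Finsupp.single (0 : Fin 2) s + Finsupp.single (1 : Fin 2) t)
        (Matrix.det (A.map MvPolynomial.C - (MvPolynomial.X (0 : Fin 2) : MvPolynomial (Fin 2) ℂ) • M.map MvPolynomial.C -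
          (MvPolynomial.X (1 : Fin 2) : MvPolynomial (Fin 2) ℂ) • (1 : Matrix (Fin m) (Fin m) (MvPolynomial (Fin 2) ℂ)))) ≠ 0 := by
  have : NeZero m := ⟨by omega⟩
  refine ⟨1, m - 1, le_rfl, by omega, ?_⟩
  have hmono : Finsupp.single (0 : Fin 2) 1 + Finsupp.single 1 (m - 1) =
      (Finsupp.single 0 1).mapDomain Fin.castSucc + Finsupp.single (Fin.last 1) (m - 1) := by
    rw [Finsupp.mapDomain_single]; rfl
  have hcoeff := coeff_det_map_C_sub_X_smul_one (pencil A M (0 : Fin 1))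
  rw [Fintype.card_fin, trace_pencil] at hcoeff
  rw [hmono, ← finSuccEquivLast_coeff_coeff, finSuccEquivLast_det_pencil_sub_X_smul_one, hcoeff,
    coeff_neg, ← map_one C, ← map_neg, ← map_pow, coeff_C_mul, coeff_single_C_sub_X_mul_C]
  simpa using htr
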